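/- arXiv:1703.00929 — 5 statements merged into one kernel-verified Lean document; each statement's English description precedes it below -/
import Mathlib

section
/- Let J be skew-symmetric, V : ℝ^n → ℝ twice continuously differentiable, A a matrix commuting with J and with e^{Ah}, and set M = I - (h/2) e^{Ah/2} J ∇²V e^{-Ah/2} and N = e^{Ah} + (h/2) e^{Ah/2} J ∇²V e^{Ah/2}, where ∇²V is evaluated at a fixed point and is symmetric, and A is skew-symmetric. Then M J M^T = N J N^T. -/
/-! Write `E = exp ((h/2) • A)`. Since `A` is skew-symmetric, `Eᵀ = E⁻¹ = exp (-(h/2) • A)`, and `E`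
commutes with `J`. With `K = (h/2) • (J * Hess)` one gets `M = E (1 - K) E⁻¹`, `N = E (1 + K) E` and
`Kᵀ = -(h/2) • (Hess * J)`, so conjugating by `E` reduces the claim to
`(1 - K) J (1 + K') = (1 + K) J (1 - K')` for `K' = (h/2) • (Hess * J)`. Both sides equal
`J - K J K'` because `K J = J K'`. -/

open Matrix NormedSpace

theorem one_sub_mul_mul_one_add_eq {R : Type*} [Ring R] {X Y J : R} (h : X * J = J * Y) :
    (1 - X) * J * (1 + Y) = (1 + X) * J * (1 - Y) := by
  simp only [sub_mul, add_mul, mul_sub, mul_add, one_mul, mul_one, h, mul_assoc]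
  abel

theorem conj_one_sub_mul_mul_conj_one_add_eq {R : Type*} [Ring R] {E F X Y J : R}
    (hEF : E * F = 1) (hFE : F * E = 1) (hJE : Commute J E) (h : X * J = J * Y) :
    E * (1 - X) * F * J * (E * (1 + Y) * F) = E * (1 + X) * E * J * (F * (1 - Y) * F) := by
  have hFJE : F * J * E = J := by rw [mul_assoc, hJE.eq, ← mul_assoc, hFE, one_mul]
  have hEJF : E * J * F = J := by rw [← hJE.eq, mul_assoc, hEF, mul_one]
  calc E * (1 - X) * F * J * (E * (1 + Y) * F)
      = E * ((1 - X) * (F * J * E) * (1 + Y)) * F := by simp only [mul_assoc]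
    _ = E * ((1 + X) * (E * J * F) * (1 - Y)) * F := by
        rw [hFJE, hEJF, one_sub_mul_mul_one_add_eq h]
    _ = E * (1 + X) * E * J * (F * (1 - Y) * F) := by simp only [mul_assoc]

namespace Matrix

variable {m 𝔸 : Type*} [Fintype m] [DecidableEq m]

section Normed

variable [NormedRing 𝔸] [NormedAlgebra ℚ 𝔸] [CompleteSpace 𝔸]

theorem exp_mul_exp_neg (A : Matrix m m 𝔸) : exp A * exp (-A) = 1 := by
  rw [← exp_add_of_commute _ _ (Commute.neg_right (Commute.refl A)), add_neg_cancel, exp_zero]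

theorem exp_neg_mul_exp (A : Matrix m m 𝔸) : exp (-A) * exp A = 1 := by
  simpa only [neg_neg] using exp_mul_exp_neg (-A)

theorem exp_add_self (A : Matrix m m 𝔸) : exp (A + A) = exp A * exp A :=
  exp_add_of_commute _ _ (Commute.refl A)

end Normed

theorem transpose_exp_of_transpose_eq_neg [CommRing 𝔸] [TopologicalSpace 𝔸] [IsTopologicalRing 𝔸]
    [Algebra ℚ 𝔸] [T2Space 𝔸] {A : Matrix m m 𝔸} (hA : Aᵀ = -A) : (exp A)ᵀ = exp (-A) := by
  rw [← exp_transpose, hA]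

end Matrix

theorem stmt1 {n : ℕ} (J A Hess : Matrix (Fin n) (Fin n) ℝ) (h : ℝ)
    (hJ : Jᵀ = -J) (hA : Aᵀ = -A) (hAJ : A * J = J * A) (hHess : Hessᵀ = Hess)
    (M N : Matrix (Fin n) (Fin n) ℝ)
    (hM : M = 1 - (h / 2) • (exp ((h / 2) • A) * (J * Hess) * exp (-((h / 2) • A))))
    (hN : N = exp (h • A) + (h / 2) • (exp ((h / 2) • A) * (J * Hess) * exp ((h / 2) • A))) :
    M * J * Mᵀ = N * J * Nᵀ := by
  set c := h / 2
  set E := exp (c • A)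
  set F := exp (-(c • A))
  have hEF : E * F = 1 := exp_mul_exp_neg _
  have hFE : F * E = 1 := exp_neg_mul_exp _
  have hEt : Eᵀ = F := transpose_exp_of_transpose_eq_neg (by rw [transpose_smul, hA, smul_neg])
  have hFt : Fᵀ = E := by rw [← hEt, transpose_transpose]
  have hM' : M = E * (1 - c • (J * Hess)) * F := by
    rw [hM, mul_sub, sub_mul, mul_one, hEF, Matrix.mul_smul, Matrix.smul_mul]
  have hN' : N = E * (1 + c • (J * Hess)) * E := by
    rw [hN, show h • A = c • A + c • A by rw [← add_smul, add_halves], exp_add_self, mul_add,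
      add_mul, mul_one, Matrix.mul_smul, Matrix.smul_mul]
  have hMt : Mᵀ = E * (1 + c • (Hess * J)) * F := by
    simp only [hM', transpose_mul, transpose_sub, transpose_one, transpose_smul, hEt, hFt, hJ,
      hHess, mul_neg, smul_neg, sub_neg_eq_add, mul_assoc]
  have hNt : Nᵀ = F * (1 - c • (Hess * J)) * F := by
    simp only [hN', transpose_mul, transpose_add, transpose_one, transpose_smul, hEt, hJ, hHess,
      mul_neg, smul_neg, ← sub_eq_add_neg, mul_assoc]
  rw [hMt, hNt, hM', hN']
  exact conj_one_sub_mul_mul_conj_one_add_eq hEF hFE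
    ((show Commute J A from hAJ.symm).smul_right c).exp_right
    (by simp only [Matrix.smul_mul, Matrix.mul_smul, mul_assoc])
end

section
/- The exponential midpoint rule q_{k+1} = e^{Ah} q_k + h e^{Ah/2} f((e^{Ah/2} q_k + e^{-Ah/2} q_{k+1})/2), applied to the semilinear Poisson system q̇ = J(Dq + ∇V(q)) with A = JD and f = J∇V, defines (implicitly) a map whose Jacobian Φ satisfies Φ J Φ^T = J, i.e., it preserves the constant Poisson structure. -/
/-!
Write `c = h/2`, `E = e^{cA}` and `S = J ∇²V`. Since `A` is skew and commutes with `J`, the flows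
`e^{±cA}` preserve `J`, and `M = E (1 - cS) E⁻¹`, `N = E (1 + cS) E`. Hence `N J Nᵀ = M J Mᵀ`
reduces to `(1 + cS) J (1 + cS)ᵀ = (1 - cS) J (1 - cS)ᵀ`, whose two sides differ by
`2c (S J + J Sᵀ) = 0` because `∇²V` is symmetric; this is `Φ J Φᵀ = J` for `Φ = M⁻¹ N`.
-/

open Matrix NormedSpace

namespace Matrix

variable {m R : Type*} [Fintype m]

section CommRing

variable [CommRing R]

theorem mul_mul_mul_transpose (P X J : Matrix m m R) :
    P * X * J * (P * X)ᵀ = P * (X * J * Xᵀ) * Pᵀ := by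
  simp only [transpose_mul, mul_assoc]

theorem mul_mul_mul_transpose_of_mul_mul_transpose_eq {P Q J : Matrix m m R}
    (hQ : Q * J * Qᵀ = J) : P * Q * J * (P * Q)ᵀ = P * J * Pᵀ := by
  rw [mul_mul_mul_transpose, hQ]

variable [DecidableEq m]

theorem one_add_smul_mul_mul_transpose_eq_one_sub {S J : Matrix m m R} (c : R)
    (hS : S * J + J * Sᵀ = 0) :
    (1 + c • S) * J * (1 + c • S)ᵀ = (1 - c • S) * J * (1 - c • S)ᵀ := by
  have hJS : J * Sᵀ = -(S * J) := eq_neg_of_add_eq_zero_right hS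
  simp only [transpose_add, transpose_sub, transpose_one, transpose_smul, add_mul, sub_mul,
    mul_add, mul_sub, one_mul, mul_one, smul_mul_assoc, mul_smul_comm, mul_assoc, hJS]
  module

theorem inv_mul_mul_mul_transpose_eq {M N J : Matrix m m R} (hM : IsUnit M)
    (hNM : N * J * Nᵀ = M * J * Mᵀ) : M⁻¹ * N * J * (M⁻¹ * N)ᵀ = J := by
  have hdet : IsUnit M.det := (isUnit_iff_isUnit_det M).mp hM
  have hdetT : IsUnit Mᵀ.det := by rwa [det_transpose]
  rw [mul_mul_mul_transpose, hNM, transpose_nonsing_inv]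
  calc M⁻¹ * (M * J * Mᵀ) * (Mᵀ)⁻¹ = (M⁻¹ * M) * J * (Mᵀ * (Mᵀ)⁻¹) := by noncomm_ring
    _ = J := by rw [nonsing_inv_mul M hdet, mul_nonsing_inv _ hdetT, one_mul, mul_one]

end CommRing

theorem exp_mul_mul_transpose_eq_of_commute [DecidableEq m] [NormedCommRing R]
    [NormedAlgebra ℚ R] [CompleteSpace R] {X J : Matrix m m R} (hX : Xᵀ = -X) (hJX : Commute J X) :
    exp X * J * (exp X)ᵀ = J := by
  rw [← exp_transpose, hX, exp_neg, ← (hJX.exp_right).eq, mul_assoc,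
    mul_nonsing_inv _ ((isUnit_iff_isUnit_det _).mp (isUnit_exp X)), mul_one]

end Matrix

theorem stmt2 {n : ℕ} (J D Hess : Matrix (Fin n) (Fin n) ℝ) (h : ℝ)
    (hJ : Jᵀ = -J) (hD : Dᵀ = D) (hJD : J * D = D * J) (hHess : Hessᵀ = Hess)
    (A : Matrix (Fin n) (Fin n) ℝ) (hA : A = J * D)
    (M N Φ : Matrix (Fin n) (Fin n) ℝ)
    (hM : M = 1 - (h / 2) • (exp ((h / 2) • A) * (J * Hess) * exp (-((h / 2) • A))))
    (hN : N = exp (h • A) + (h / 2) • (exp ((h / 2) • A) * (J * Hess) * exp ((h / 2) • A)))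
    (hMinv : IsUnit M) (hΦ : Φ = M⁻¹ * N) :
    Φ * J * Φᵀ = J := by
  set c := h / 2
  set E := exp (c • A)
  set F := exp (-(c • A))
  set S := J * Hess
  have hAskew : Aᵀ = -A := by rw [hA, transpose_mul, hJ, hD, mul_neg, hJD]
  have hJA : Commute J A := hA ▸ (Commute.refl J).mul_right hJD
  have hE : E * J * Eᵀ = J :=
    exp_mul_mul_transpose_eq_of_commute (by rw [transpose_smul, hAskew, smul_neg])
      (hJA.smul_right c)
  have hF : F * J * Fᵀ = J :=
    exp_mul_mul_transpose_eq_of_commute (by rw [transpose_neg, transpose_smul, hAskew, smul_neg])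
      (hJA.smul_right c).neg_right
  have hEF : E * F = 1 := by
    rw [← Matrix.exp_add_of_commute _ _ (Commute.refl (c • A)).neg_right, add_neg_cancel,
      exp_zero]
  have hEE : exp (h • A) = E * E := by
    rw [← Matrix.exp_add_of_commute _ _ (Commute.refl _), ← add_smul, add_halves]
  have hS : S * J + J * Sᵀ = 0 := by
    rw [transpose_mul, hJ, hHess, mul_neg, mul_neg, ← mul_assoc]
    exact add_neg_cancel _
  have hM' : M = E * (1 - c • S) * F := by
    rw [hM, mul_sub, sub_mul, mul_one, hEF, mul_smul_comm, smul_mul_assoc]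
  have hN' : N = E * (1 + c • S) * E := by
    rw [hN, hEE, mul_add, add_mul, mul_one, mul_smul_comm, smul_mul_assoc]
  rw [hΦ]
  refine inv_mul_mul_mul_transpose_eq hMinv ?_
  rw [hM', hN', mul_mul_mul_transpose_of_mul_mul_transpose_eq hE,
    mul_mul_mul_transpose_of_mul_mul_transpose_eq hF, mul_mul_mul_transpose,
    mul_mul_mul_transpose, one_add_smul_mul_mul_transpose_eq_one_sub c hS]
end

section
/- Let J be skew-symmetric, D symmetric, JD = DJ, A = JD, S = e^{Ah}, T = ∫₀^h e^{Aτ} dτ. Suppose ∇̄V : ℝ^n × ℝ^n → ℝ^n is a discrete gradient of V, i.e., ∇̄V(x,y)·(y-x) = V(y) - V(x). If q_{k+1} = S q_k + T J ∇̄V(q_k, q_{k+1}), then H(q_{k+1}) = H(q_k), where H(q) = ½ q^T D q + V(q). -/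
/-!
The step map is `q ↦ S q + M g` with `M = T J`. Since `A = J D` is skew-symmetric and `D` commutes
with `A`, the flow `S = e^{hA}` is orthogonal and commutes with `D`, and the integral `T` satisfies
`A T = S - 1` and `Tᵀ S = T`. These give `Sᵀ D S = D`, `Mᵀ D S = 1 - S` and
`Mᵀ D M = -(M + Mᵀ)`; expanding `q'ᵀ D q'` with them, the change of the quadratic part of `H` is
`g ⬝ᵥ (q - S q - M g)`, which is exactly `-(q' - q) ⬝ᵥ g = -(V q' - V q)` by the discrete-gradient
property.
-/

open Matrix NormedSpace

theorem Matrix.mulVec_dotProduct_mulVec {k l n R : Type*} [Fintype k] [Fintype l] [Fintype n]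
    [CommSemiring R] (M : Matrix k l R) (N : Matrix k n R) (x : l → R) (y : n → R) :
    M *ᵥ x ⬝ᵥ N *ᵥ y = x ⬝ᵥ (Mᵀ * N) *ᵥ y := by
  rw [dotProduct_mulVec, ← vecMul_transpose, dotProduct_mulVec, vecMul_vecMul]

theorem Matrix.transpose_mul_of_skew_of_symm {m R : Type*} [Fintype m] [CommRing R]
    {J D : Matrix m m R} (hJ : Jᵀ = -J) (hD : Dᵀ = D) (hJD : Commute J D) :
    (J * D)ᵀ = -(J * D) := by
  rw [transpose_mul, hD, hJ, Matrix.mul_neg, hJD.eq]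

namespace Matrix

variable {m R : Type*} [Fintype m] [DecidableEq m] [CommRing R] {J D S T : Matrix m m R}

theorem transpose_mul_mul_self_of_commute (hS : Sᵀ * S = 1) (hDS : Commute D S) :
    Sᵀ * D * S = D := by
  rw [Matrix.mul_assoc, hDS.eq, ← Matrix.mul_assoc, hS, Matrix.one_mul]

theorem transpose_mul_mul_mul_of_mul_eq_sub_one (hJ : Jᵀ = -J) (hDT : Commute D Tᵀ)
    (hAT : J * D * T = S - 1) (hTS : Tᵀ * S = T) : (T * J)ᵀ * D * S = 1 - S := by
  calc (T * J)ᵀ * D * S = -(J * (Tᵀ * D) * S) := by rw [transpose_mul, hJ]; noncomm_ring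
    _ = -(J * D * (Tᵀ * S)) := by rw [← hDT.eq]; noncomm_ring
    _ = 1 - S := by rw [hTS, hAT]; noncomm_ring

theorem transpose_mul_mul_mul_self_of_mul_eq_sub_one (hJ : Jᵀ = -J) (hJT : Commute J Tᵀ)
    (hAT : J * D * T = S - 1) (hTS : Tᵀ * S = T) :
    (T * J)ᵀ * D * (T * J) = -(T * J + (T * J)ᵀ) := by
  calc (T * J)ᵀ * D * (T * J) = -((J * Tᵀ) * D * T * J) := by
        rw [transpose_mul, hJ]; noncomm_ring
    _ = -(Tᵀ * (J * D * T) * J) := by rw [hJT.eq]; noncomm_ring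
    _ = -(Tᵀ * S * J) + J * Tᵀ := by rw [hAT, hJT.eq]; noncomm_ring
    _ = -(T * J + (T * J)ᵀ) := by rw [hTS, transpose_mul, hJ]; noncomm_ring

end Matrix

variable {m : Type*} [Fintype m] [DecidableEq m]

section
attribute [local instance] Matrix.linftyOpNormedRing Matrix.linftyOpNormedAlgebra

-- `hasDerivAt_exp_smul_const'` needs a normed algebra, which the entrywise norm below does not
-- give; a limit of slopes only involves the topology, which the two norms share.
theorem Matrix.tendsto_slope_exp_smul (A : Matrix m m ℝ) (t : ℝ) :
    Filter.Tendsto (slope (fun τ : ℝ => exp (τ • A)) t) (nhdsWithin t {t}ᶜ)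
      (nhds (A * exp (t • A))) :=
  hasDerivAt_iff_tendsto_slope.mp (hasDerivAt_exp_smul_const' A t)

end

attribute [local instance] Matrix.normedAddCommGroup Matrix.normedSpace

theorem LinearMap.intervalIntegral_comp_comm {E F : Type*} [NormedAddCommGroup E]
    [NormedSpace ℝ E] [FiniteDimensional ℝ E] [NormedAddCommGroup F] [NormedSpace ℝ F]
    [FiniteDimensional ℝ F] (L : E →ₗ[ℝ] F) {f : ℝ → E} {a b : ℝ}
    (hf : IntervalIntegrable f MeasureTheory.volume a b) :
    ∫ τ in a..b, L (f τ) = L (∫ τ in a..b, f τ) :=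
  L.toContinuousLinearMap.intervalIntegral_comp_comm hf

namespace Matrix

theorem hasDerivAt_exp_smul (A : Matrix m m ℝ) (t : ℝ) :
    HasDerivAt (fun τ : ℝ => exp (τ • A)) (A * exp (t • A)) t :=
  hasDerivAt_iff_tendsto_slope.mpr (tendsto_slope_exp_smul A t)

theorem continuous_exp_smul (A : Matrix m m ℝ) : Continuous fun τ : ℝ => exp (τ • A) :=
  continuous_iff_continuousAt.2 fun t => (hasDerivAt_exp_smul A t).continuousAt

theorem exp_add_smul (A : Matrix m m ℝ) (s t : ℝ) :
    exp ((s + t) • A) = exp (s • A) * exp (t • A) := by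
  rw [add_smul]
  exact exp_add_of_commute _ _ (((Commute.refl A).smul_left s).smul_right t)

theorem transpose_exp_smul_mul_self {A : Matrix m m ℝ} (hA : Aᵀ = -A) (t : ℝ) :
    (exp (t • A))ᵀ * exp (t • A) = 1 := by
  rw [← exp_transpose, transpose_smul, hA, smul_neg, ← neg_smul, ← exp_add_smul,
    neg_add_cancel, zero_smul, exp_zero]

variable (A : Matrix m m ℝ) (a b : ℝ)

theorem mul_intervalIntegral_exp_smul (X : Matrix m m ℝ) :
    X * ∫ τ in a..b, exp (τ • A) = ∫ τ in a..b, X * exp (τ • A) :=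
  ((LinearMap.mulLeft ℝ X).intervalIntegral_comp_comm
    ((continuous_exp_smul A).intervalIntegrable a b)).symm

theorem intervalIntegral_exp_smul_mul (X : Matrix m m ℝ) :
    (∫ τ in a..b, exp (τ • A)) * X = ∫ τ in a..b, exp (τ • A) * X :=
  ((LinearMap.mulRight ℝ X).intervalIntegral_comp_comm
    ((continuous_exp_smul A).intervalIntegrable a b)).symm

theorem transpose_intervalIntegral_exp_smul :
    (∫ τ in a..b, exp (τ • A))ᵀ = ∫ τ in a..b, exp (τ • Aᵀ) := by
  refine ((transposeLinearEquiv m m ℝ ℝ).toLinearMap.intervalIntegral_comp_comm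
    ((continuous_exp_smul A).intervalIntegrable a b)).symm.trans
    (intervalIntegral.integral_congr fun τ _ => ?_)
  change (exp (τ • A))ᵀ = _
  rw [← exp_transpose, transpose_smul]

theorem _root_.Commute.intervalIntegral_exp_smul_right {X : Matrix m m ℝ} (hXA : Commute X A) :
    Commute X (∫ τ in a..b, exp (τ • A)) := by
  rw [Commute, SemiconjBy, mul_intervalIntegral_exp_smul, intervalIntegral_exp_smul_mul]
  exact intervalIntegral.integral_congr fun t _ => ((hXA.smul_right t).exp_right).eq

theorem mul_intervalIntegral_exp_smul_self (h : ℝ) :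
    A * ∫ τ in (0 : ℝ)..h, exp (τ • A) = exp (h • A) - 1 := by
  have hcont : Continuous fun τ : ℝ => A * exp (τ • A) :=
    continuous_const.mul (continuous_exp_smul A)
  rw [mul_intervalIntegral_exp_smul, intervalIntegral.integral_eq_sub_of_hasDerivAt
    (fun t _ => hasDerivAt_exp_smul A t) (hcont.intervalIntegrable 0 h), zero_smul, exp_zero]

theorem intervalIntegral_exp_neg_smul_mul_exp (h : ℝ) :
    (∫ τ in (0 : ℝ)..h, exp (τ • -A)) * exp (h • A) = ∫ τ in (0 : ℝ)..h, exp (τ • A) := by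
  calc (∫ τ in (0 : ℝ)..h, exp (τ • -A)) * exp (h • A)
      = ∫ τ in (0 : ℝ)..h, exp ((h - τ) • A) := by
        rw [intervalIntegral_exp_smul_mul]
        refine intervalIntegral.integral_congr fun τ _ => ?_
        rw [smul_neg, ← neg_smul, ← exp_add_smul, ← sub_eq_neg_add]
    _ = ∫ τ in (0 : ℝ)..h, exp (τ • A) := by
        rw [intervalIntegral.integral_comp_sub_left (fun τ : ℝ => exp (τ • A)), sub_self,
          sub_zero]

end Matrix

theorem quadratic_add_eq_of_discreteGradient_step {D S M : Matrix m m ℝ} (hD : Dᵀ = D)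
    (hS : Sᵀ * D * S = D) (hMS : Mᵀ * D * S = 1 - S) (hM : Mᵀ * D * M = -(M + Mᵀ))
    {V : (m → ℝ) → ℝ} {g q q' : m → ℝ} (hg : g ⬝ᵥ (q' - q) = V q' - V q)
    (hstep : q' = S *ᵥ q + M *ᵥ g) :
    1 / 2 * (q' ⬝ᵥ D *ᵥ q') + V q' = 1 / 2 * (q ⬝ᵥ D *ᵥ q) + V q := by
  have hSM : Sᵀ * D * M = (Mᵀ * D * S)ᵀ := by
    simp only [transpose_mul, transpose_transpose, hD, Matrix.mul_assoc]
  have hquad : q' ⬝ᵥ D *ᵥ q' =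
      q ⬝ᵥ D *ᵥ q + 2 * (g ⬝ᵥ q - g ⬝ᵥ S *ᵥ q) - 2 * (g ⬝ᵥ M *ᵥ g) := by
    simp only [hstep, mulVec_add, add_dotProduct, dotProduct_add, mulVec_mulVec,
      mulVec_dotProduct_mulVec, ← Matrix.mul_assoc, hS, hSM, hMS, hM, dotProduct_transpose_mulVec,
      neg_mulVec, add_mulVec, sub_mulVec, one_mulVec, dotProduct_neg, dotProduct_add,
      dotProduct_sub]
    ring
  have hV : V q' - V q = g ⬝ᵥ S *ᵥ q + g ⬝ᵥ M *ᵥ g - g ⬝ᵥ q := by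
    rw [← hg, hstep, dotProduct_sub, dotProduct_add]
  linarith

theorem stmt4 {n : ℕ} (J D : Matrix (Fin n) (Fin n) ℝ) (h : ℝ)
    (hJ : Jᵀ = -J) (hD : Dᵀ = D) (hJD : J * D = D * J)
    (A S T : Matrix (Fin n) (Fin n) ℝ)
    (hA : A = J * D) (hS : S = exp (h • A)) (hT : T = ∫ τ in (0:ℝ)..h, exp (τ • A))
    (V : (Fin n → ℝ) → ℝ) (dgV : (Fin n → ℝ) → (Fin n → ℝ) → (Fin n → ℝ))
    (hdg : ∀ x y, dgV x y ⬝ᵥ (y - x) = V y - V x)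
    (H : (Fin n → ℝ) → ℝ) (hH : ∀ q, H q = (1/2) * (q ⬝ᵥ D.mulVec q) + V q)
    (qk qk1 : Fin n → ℝ)
    (hstep : qk1 = S.mulVec qk + T.mulVec (J.mulVec (dgV qk qk1))) :
    H qk1 = H qk := by
  have hJD : Commute J D := hJD
  have hA_skew : Aᵀ = -A := hA ▸ transpose_mul_of_skew_of_symm hJ hD hJD
  have hDA : Commute D A := hA ▸ hJD.symm.mul_right (Commute.refl D)
  have hJA : Commute J A := hA ▸ (Commute.refl J).mul_right hJD
  have hTt : Tᵀ = ∫ τ in (0:ℝ)..h, exp (τ • -A) := by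
    rw [hT, transpose_intervalIntegral_exp_smul, hA_skew]
  have hSS : Sᵀ * S = 1 := hS ▸ transpose_exp_smul_mul_self hA_skew h
  have hDS : Commute D S := hS ▸ (hDA.smul_right h).exp_right
  have hDT : Commute D Tᵀ := hTt ▸ hDA.neg_right.intervalIntegral_exp_smul_right _ _ _
  have hJT : Commute J Tᵀ := hTt ▸ hJA.neg_right.intervalIntegral_exp_smul_right _ _ _
  have hAT : J * D * T = S - 1 := hA ▸ hS ▸ hT ▸ mul_intervalIntegral_exp_smul_self A h
  have hTS : Tᵀ * S = T := hTt ▸ hS ▸ hT ▸ intervalIntegral_exp_neg_smul_mul_exp A h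
  rw [hH, hH]
  exact quadratic_add_eq_of_discreteGradient_step hD (transpose_mul_mul_self_of_commute hSS hDS)
    (transpose_mul_mul_mul_of_mul_eq_sub_one hJ hDT hAT hTS)
    (transpose_mul_mul_mul_self_of_mul_eq_sub_one hJ hJT hAT hTS) (hdg qk qk1)
    (by rwa [← mulVec_mulVec])
end

section
/- A one-step composition of two exponential midpoint steps with stepsizes b₁h and b₂h, namely Z₁ = e^{Ab₁h}q + b₁h e^{Ab₁h/2} f((e^{Ab₁h/2}q + e^{-Ab₁h/2}Z₁)/2) followed by Z₂ = e^{Ab₂h}Z₁ + b₂h e^{Ab₂h/2} f((e^{Ab₂h/2}Z₁ + e^{-Ab₂h/2}Z₂)/2), is equivalent to the 2-stage diagonally implicit exponential Runge–Kutta scheme Q₁ = e^{Ahc₁}q + h(b₁/2)f(Q₁), Q₂ = e^{Ahc₂}q + h b₁ e^{Ah(c₂-c₁)}f(Q₁) + h(b₂/2)f(Q₂), Z₂ = e^{Ah(b₁+b₂)}q + h b₁ e^{Ah(b₁/2+b₂)}f(Q₁) + h b₂ e^{Ah b₂/2}f(Q₂), where c₁ = b₁/2, c₂ = b₁ + b₂/2,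 under the substitutions Q₁ = (e^{Ab₁h/2}q + e^{-Ab₁h/2}Z₁)/2 and Q₂ = (e^{Ab₂h/2}Z₁ + e^{-Ab₂h/2}Z₂)/2. -/
/-!
Applying `e^{τA/2}` to the midpoint `Q = (e^{τA/2} y + e^{-τA/2} z)/2` of an exponential midpoint
step `y ↦ z` gives `e^{τA/2} Q = (e^{τA} y + z)/2`; since `e^{τA/2}` is invertible, the step is
equivalent to the stage equation `Q = e^{τA/2} y + (τ/2) f(Q)`. Substituting the first step into
the second then turns its stage equation and its update into the Runge–Kutta form in terms of `q`.
-/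

open Matrix NormedSpace

section ExponentialMidpoint

variable {ι : Type*} [Fintype ι] [DecidableEq ι] (A : Matrix ι ι ℝ)

theorem exp_smul_mulVec_exp_smul_mulVec (s t : ℝ) (x : ι → ℝ) :
    exp (s • A) *ᵥ (exp (t • A) *ᵥ x) = exp ((s + t) • A) *ᵥ x := by
  rw [mulVec_mulVec, ← exp_add_of_commute _ _ ((Commute.refl A).smul_left s |>.smul_right t),
    add_smul]

theorem exp_smul_mulVec_injective (s : ℝ) : Function.Injective (exp (s • A) *ᵥ ·) := by
  refine Function.LeftInverse.injective (g := (exp ((-s) • A) *ᵥ ·)) fun x => ?_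
  simp only [exp_smul_mulVec_exp_smul_mulVec, neg_add_cancel, zero_smul, exp_zero, one_mulVec]

theorem exp_smul_mulVec_add_smul {s t u s' u' : ℝ} (hs : s + t = s') (hu : s + u = u')
    (c : ℝ) (x v : ι → ℝ) :
    exp (s • A) *ᵥ (exp (t • A) *ᵥ x + c • exp (u • A) *ᵥ v) =
      exp (s' • A) *ᵥ x + c • exp (u' • A) *ᵥ v := by
  rw [mulVec_add, mulVec_smul, exp_smul_mulVec_exp_smul_mulVec,
    exp_smul_mulVec_exp_smul_mulVec, hs, hu]

theorem exp_midpoint_step_iff (τ : ℝ) (y z Q F : ι → ℝ)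
    (hQ : Q = (1 / 2 : ℝ) • (exp ((τ / 2) • A) *ᵥ y + exp (-((τ / 2) • A)) *ᵥ z)) :
    z = exp (τ • A) *ᵥ y + τ • exp ((τ / 2) • A) *ᵥ F ↔
      Q = exp ((τ / 2) • A) *ᵥ y + (τ / 2) • F := by
  have hEQ : exp ((τ / 2) • A) *ᵥ Q = (1 / 2 : ℝ) • (exp (τ • A) *ᵥ y + z) := by
    rw [hQ, ← neg_smul]
    simp only [mulVec_smul, mulVec_add, exp_smul_mulVec_exp_smul_mulVec, add_halves,
      add_neg_cancel, zero_smul, exp_zero, one_mulVec]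
  rw [← (exp_smul_mulVec_injective A (τ / 2)).eq_iff (a := Q), hEQ, mulVec_add, mulVec_smul,
    exp_smul_mulVec_exp_smul_mulVec, add_halves]
  constructor
  · rintro rfl
    module
  · intro h
    linear_combination (norm := module) (2 : ℝ) • h

end ExponentialMidpoint

theorem stmt14 {n : ℕ} (A : Matrix (Fin n) (Fin n) ℝ) (f : (Fin n → ℝ) → (Fin n → ℝ))
    (h b₁ b₂ : ℝ) (q Z₁ Z₂ Q₁ Q₂ : Fin n → ℝ)
    (c₁ c₂ : ℝ) (hc₁ : c₁ = b₁ / 2) (hc₂ : c₂ = b₁ + b₂ / 2)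
    (hQ₁ : Q₁ = (1 / 2 : ℝ) •
      ((exp ((b₁ * h / 2) • A)).mulVec q + (exp (-((b₁ * h / 2) • A))).mulVec Z₁))
    (hQ₂ : Q₂ = (1 / 2 : ℝ) •
      ((exp ((b₂ * h / 2) • A)).mulVec Z₁ + (exp (-((b₂ * h / 2) • A))).mulVec Z₂)) :
    ((Z₁ = (exp ((b₁ * h) • A)).mulVec q +
        (b₁ * h) • (exp ((b₁ * h / 2) • A)).mulVec (f Q₁)) ∧
     (Z₂ = (exp ((b₂ * h) • A)).mulVec Z₁ +
        (b₂ * h) • (exp ((b₂ * h / 2) • A)).mulVec (f Q₂))) ↔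
    ((Q₁ = (exp ((h * c₁) • A)).mulVec q + (h * (b₁ / 2)) • f Q₁) ∧
     (Q₂ = (exp ((h * c₂) • A)).mulVec q +
        (h * b₁) • (exp ((h * (c₂ - c₁)) • A)).mulVec (f Q₁) + (h * (b₂ / 2)) • f Q₂) ∧
     (Z₂ = (exp ((h * (b₁ + b₂)) • A)).mulVec q +
        (h * b₁) • (exp ((h * (b₁ / 2 + b₂)) • A)).mulVec (f Q₁) +
        (h * b₂) • (exp ((h * (b₂ / 2)) • A)).mulVec (f Q₂))) := by
  have hstage₁ : Z₁ = exp ((b₁ * h) • A) *ᵥ q + (b₁ * h) • exp ((b₁ * h / 2) • A) *ᵥ f Q₁ ↔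
      Q₁ = exp ((h * c₁) • A) *ᵥ q + (h * (b₁ / 2)) • f Q₁ := by
    rw [exp_midpoint_step_iff A _ q Z₁ Q₁ _ hQ₁, hc₁, mul_div_assoc', mul_comm h]
  have hstage₂ (hZ₁ : Z₁ = exp ((b₁ * h) • A) *ᵥ q + (b₁ * h) • exp ((b₁ * h / 2) • A) *ᵥ f Q₁) :
      Z₂ = exp ((b₂ * h) • A) *ᵥ Z₁ + (b₂ * h) • exp ((b₂ * h / 2) • A) *ᵥ f Q₂ ↔
      Q₂ = exp ((h * c₂) • A) *ᵥ q + (h * b₁) • exp ((h * (c₂ - c₁)) • A) *ᵥ f Q₁ +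
        (h * (b₂ / 2)) • f Q₂ := by
    rw [exp_midpoint_step_iff A _ Z₁ Z₂ Q₂ _ hQ₂, hZ₁,
      exp_smul_mulVec_add_smul A (s' := h * c₂) (u' := h * (c₂ - c₁)) (by rw [hc₂]; ring)
        (by rw [hc₁, hc₂]; ring),
      mul_div_assoc', mul_comm h b₁, mul_comm h b₂]
  have hupdate (hZ₁ : Z₁ = exp ((b₁ * h) • A) *ᵥ q + (b₁ * h) • exp ((b₁ * h / 2) • A) *ᵥ f Q₁) :
      exp ((b₂ * h) • A) *ᵥ Z₁ + (b₂ * h) • exp ((b₂ * h / 2) • A) *ᵥ f Q₂ =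
      exp ((h * (b₁ + b₂)) • A) *ᵥ q + (h * b₁) • exp ((h * (b₁ / 2 + b₂)) • A) *ᵥ f Q₁ +
        (h * b₂) • exp ((h * (b₂ / 2)) • A) *ᵥ f Q₂ := by
    rw [hZ₁, exp_smul_mulVec_add_smul A (s' := h * (b₁ + b₂)) (u' := h * (b₁ / 2 + b₂))
        (by ring) (by ring), mul_div_assoc', mul_comm h b₁, mul_comm h b₂]
  constructor
  · rintro ⟨hZ₁, hZ₂eq⟩
    exact ⟨hstage₁.1 hZ₁, (hstage₂ hZ₁).1 hZ₂eq, hZ₂eq.trans (hupdate hZ₁)⟩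
  · rintro ⟨hQ₁eq, hQ₂eq, -⟩
    have hZ₁ := hstage₁.2 hQ₁eq
    exact ⟨hZ₁, (hstage₂ hZ₁).2 hQ₂eq⟩
end

section
/- For A skew-symmetric with S = e^{Ah}, T = ∫₀^h e^{Aτ}dτ, and J skew-symmetric commuting with A (hence with S and T): J^T T^T A T = J^T T + J T^T, and consequently ½ g^T J^T T^T A T g = g^T T^T J g for all g ∈ ℝ^n. -/
/-!
By the fundamental theorem of calculus `A T = S - 1`. Skewness of `A` gives `Sᵀ = e^{-hA}`, so
`Sᵀ T = ∫₀ʰ e^{(τ-h)A} dτ = ∫₀ʰ e^{-τA} dτ = Tᵀ`; hence `Tᵀ A T = -(A T)ᵀ T = T - Sᵀ T = T - Tᵀ`,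
and multiplying by `Jᵀ = -J` gives the identity. For the quadratic form, `g ⬝ᵥ (Jᵀ T) g` equals
`g ⬝ᵥ (Tᵀ J) g` by transposition, and `J Tᵀ = Tᵀ J` because `J` commutes with `T`.
-/

open Matrix NormedSpace

attribute [local instance] Matrix.normedAddCommGroup Matrix.normedSpace

namespace Matrix

variable {m n p : Type*} [Fintype m] [Fintype n] [Fintype p] {a b : ℝ}

theorem mul_intervalIntegral (M : Matrix m n ℝ) {f : ℝ → Matrix n p ℝ} (hf : Continuous f) :
    M * ∫ x in a..b, f x = ∫ x in a..b, M * f x :=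
  ((mulLeftLinearMap p ℝ M).toContinuousLinearMap.intervalIntegral_comp_comm
    (hf.intervalIntegrable a b)).symm

theorem intervalIntegral_mul (M : Matrix n p ℝ) {f : ℝ → Matrix m n ℝ} (hf : Continuous f) :
    (∫ x in a..b, f x) * M = ∫ x in a..b, f x * M :=
  ((mulRightLinearMap m ℝ M).toContinuousLinearMap.intervalIntegral_comp_comm
    (hf.intervalIntegrable a b)).symm

theorem transpose_intervalIntegral {f : ℝ → Matrix m n ℝ} (hf : Continuous f) :
    (∫ x in a..b, f x)ᵀ = ∫ x in a..b, (f x)ᵀ :=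
  ((transposeLinearEquiv m n ℝ ℝ).toLinearMap.toContinuousLinearMap.intervalIntegral_comp_comm
    (hf.intervalIntegrable a b)).symm

section Exp

variable [DecidableEq m] (A : Matrix m m ℝ)

theorem hasDerivAt_exp_smul_const' (t : ℝ) :
    HasDerivAt (fun τ : ℝ => exp (τ • A)) (A * exp (t • A)) t := by
  -- The sup norm is not submultiplicative; differentiate in the operator norm (same topology).
  open scoped Matrix.Norms.Operator in exact _root_.hasDerivAt_exp_smul_const' A t

theorem continuous_exp_smul_const : Continuous fun τ : ℝ => exp (τ • A) :=
  continuous_iff_continuousAt.2 fun t => (hasDerivAt_exp_smul_const' A t).continuousAt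

theorem mul_integral_exp_smul_const :
    A * ∫ τ in a..b, exp (τ • A) = exp (b • A) - exp (a • A) := by
  rw [mul_intervalIntegral A (continuous_exp_smul_const A)]
  exact intervalIntegral.integral_eq_sub_of_hasDerivAt
    (fun t _ => hasDerivAt_exp_smul_const' A t)
    ((continuous_const.mul (continuous_exp_smul_const A)).intervalIntegrable a b)

theorem commute_integral_exp_smul_const {J : Matrix m m ℝ} (hAJ : Commute A J) :
    Commute J (∫ τ in a..b, exp (τ • A)) := by
  rw [Commute, SemiconjBy, mul_intervalIntegral J (continuous_exp_smul_const A),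
    intervalIntegral_mul J (continuous_exp_smul_const A)]
  exact intervalIntegral.integral_congr fun τ _ => ((hAJ.symm.smul_right τ).exp_right).eq

variable {A}

theorem transpose_exp_smul_of_transpose_eq_neg (hA : Aᵀ = -A) (t : ℝ) :
    (exp (t • A))ᵀ = exp ((-t) • A) := by
  rw [← exp_transpose, transpose_smul, hA, smul_neg, neg_smul]

theorem transpose_exp_smul_mul_integral_exp_smul (hA : Aᵀ = -A) (h : ℝ) :
    (exp (h • A))ᵀ * ∫ τ in (0:ℝ)..h, exp (τ • A) = (∫ τ in (0:ℝ)..h, exp (τ • A))ᵀ := by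
  rw [mul_intervalIntegral _ (continuous_exp_smul_const A),
    transpose_intervalIntegral (continuous_exp_smul_const A)]
  have hshift : ∀ τ : ℝ, (exp (h • A))ᵀ * exp (τ • A) = exp ((τ - h) • A) := fun τ => by
    rw [transpose_exp_smul_of_transpose_eq_neg hA, ← exp_add_of_commute _ _
      (((Commute.refl A).smul_left _).smul_right _), ← add_smul, neg_add_eq_sub]
  simp_rw [hshift, transpose_exp_smul_of_transpose_eq_neg hA]
  rw [intervalIntegral.integral_comp_sub_right (fun σ => exp (σ • A)),
    intervalIntegral.integral_comp_neg (fun σ => exp (σ • A)), zero_sub, sub_self, neg_zero]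

end Exp

section Algebra

variable {R : Type*} [CommRing R]

theorem transpose_mul_mul_eq_sub_transpose [DecidableEq n] {A S T : Matrix n n R}
    (hA : Aᵀ = -A) (hAT : A * T = S - 1) (hST : Sᵀ * T = Tᵀ) : Tᵀ * A * T = T - Tᵀ := by
  have hTA : Tᵀ * A = 1 - Sᵀ := by
    rw [← neg_neg A, ← hA, mul_neg, ← transpose_mul, hAT, transpose_sub, transpose_one, neg_sub]
  rw [hTA, sub_mul, one_mul, hST]

theorem dotProduct_transpose_mul_mulVec_self (M N : Matrix n n R) (g : n → R) :
    g ⬝ᵥ (Mᵀ * N) *ᵥ g = g ⬝ᵥ (Nᵀ * M) *ᵥ g := by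
  rw [← dotProduct_transpose_mulVec, transpose_mul, transpose_transpose]

theorem mul_transpose_eq_transpose_mul_of_commute {J T : Matrix n n R} (hJ : Jᵀ = -J)
    (hJT : Commute J T) : J * Tᵀ = Tᵀ * J := by
  have := congrArg transpose hJT.eq
  rw [transpose_mul, transpose_mul, hJ, mul_neg, neg_mul, neg_inj] at this
  exact this.symm

end Algebra

end Matrix

theorem stmt15_general {n : ℕ} (A J : Matrix (Fin n) (Fin n) ℝ)
    (hA : Aᵀ = -A) (hJ : Jᵀ = -J) (hAJ : A * J = J * A) (h : ℝ)
    (T : Matrix (Fin n) (Fin n) ℝ)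
    (hT : T = ∫ τ in (0:ℝ)..h, exp (τ • A)) :
    Jᵀ * Tᵀ * A * T = Jᵀ * T + J * Tᵀ ∧
    ∀ g : Fin n → ℝ,
      (1 / 2) * (g ⬝ᵥ (Jᵀ * Tᵀ * A * T).mulVec g) = g ⬝ᵥ (Tᵀ * J).mulVec g := by
  have hAT : A * T = exp (h • A) - 1 := by
    rw [hT, mul_integral_exp_smul_const, zero_smul, exp_zero]
  have hST : (exp (h • A))ᵀ * T = Tᵀ := hT ▸ transpose_exp_smul_mul_integral_exp_smul hA h
  have hJT : J * Tᵀ = Tᵀ * J :=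
    mul_transpose_eq_transpose_mul_of_commute hJ (hT ▸ commute_integral_exp_smul_const A hAJ)
  have key : Jᵀ * Tᵀ * A * T = Jᵀ * T + J * Tᵀ := by
    rw [mul_assoc, mul_assoc, ← mul_assoc Tᵀ, transpose_mul_mul_eq_sub_transpose hA hAT hST,
      mul_sub, hJ]
    simp only [neg_mul, sub_neg_eq_add]
  refine ⟨key, fun g => ?_⟩
  rw [key, add_mulVec, dotProduct_add, dotProduct_transpose_mul_mulVec_self, hJT]
  ring

theorem stmt15 {n : ℕ} (A J : Matrix (Fin n) (Fin n) ℝ)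
    (hA : Aᵀ = -A) (hJ : Jᵀ = -J) (hAJ : A * J = J * A) (h : ℝ)
    (S T : Matrix (Fin n) (Fin n) ℝ)
    (hS : S = exp (h • A)) (hT : T = ∫ τ in (0:ℝ)..h, exp (τ • A)) :
    Jᵀ * Tᵀ * A * T = Jᵀ * T + J * Tᵀ ∧
    ∀ g : Fin n → ℝ,
      (1 / 2) * (g ⬝ᵥ (Jᵀ * Tᵀ * A * T).mulVec g) = g ⬝ᵥ (Tᵀ * J).mulVec g :=
  stmt15_general A J hA hJ hAJ h T hT
end
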